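/- arXiv:2010.09779 — 2 statements merged into one kernel-verified Lean document; each statement's English description precedes it below -/
import Mathlib

section
/- Let ψ : ℝ → ℝ be infinitely differentiable and satisfy the ordinary differential equation ψ'''(s) + 12·ψ(s)·ψ'(s) − 4s·ψ'(s) − 2·ψ(s) = 0 for all s ∈ ℝ. Define φ(x,t,r) = t^(-2/3)·ψ( t^(-1/3)·r + t^(-4/3)·x^2 ) for (x,t,r) ∈ ℝ × (0,∞) × ℝ. Then φ satisfies the (r-differentiated) KP equation: ∂_r( ∂_t φ + φ·∂_r φ + (1/12)·∂_r^3 φ ) + (1/4)·∂_x^2 φ = 0 at every point of ℝ × (0,∞) × ℝ. -/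
/-- The left-hand side of the (r-differentiated) KP equation
`∂_r(∂_t φ + φ·∂_r φ + (1/12)·∂_r³ φ) + (1/4)·∂_x² φ` for `φ = φ x t r`. -/
noncomputable def kpDiff (φ : ℝ → ℝ → ℝ → ℝ) (x t r : ℝ) : ℝ :=
  deriv (fun r' => deriv (fun t' => φ x t' r') t
      + φ x t r' * deriv (fun s => φ x t s) r'
      + (1/12) * iteratedDeriv 3 (fun s => φ x t s) r') r
    + (1/4) * iteratedDeriv 2 (fun x' => φ x' t r) x

/-!
With `w = t^{-1/3}` the ansatz reads `φ = w² ψ(ξ)`, `ξ = w r + w⁴ x²`. Substituting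
`r = (ξ - w⁴x²)/w`, the flux `∂_t φ + φ ∂_r φ + (1/12) ∂_r³ φ` becomes `w⁵ F(ξ)` for an explicit
`F` built from `ψ, ψ', ψ'''` and the parameter `y = w⁴ x²`. Its `r`-derivative `w⁶ F'(ξ)` and
`(1/4) ∂_x² φ` both involve `y`, but the `y`-terms cancel, and the sum is `w⁶/12` times the
derivative of the ODE at `ξ`.
-/

open Real

section Calculus

variable {f : ℝ → ℝ}

theorem hasDerivAt_iteratedDeriv {n : WithTop ℕ∞} (hf : ContDiff ℝ n f) {k : ℕ} (hk : k < n)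
    (s : ℝ) : HasDerivAt (iteratedDeriv k f) (iteratedDeriv (k + 1) f s) s := by
  rw [iteratedDeriv_succ]
  exact ((hf.differentiable_iteratedDeriv k hk) s).hasDerivAt

theorem iteratedDeriv_comp_affine {n : ℕ} (hf : ContDiff ℝ n f) (a b : ℝ) :
    iteratedDeriv n (fun r => f (a * r + b)) = fun r => a ^ n * iteratedDeriv n f (a * r + b) := by
  have hfb : ContDiff ℝ n (fun z => f (z + b)) := hf.comp (contDiff_id.add contDiff_const)
  rw [iteratedDeriv_comp_const_mul hfb a, iteratedDeriv_comp_add_const]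

theorem iteratedDeriv_two_comp_add_mul_sq (hf : ContDiff ℝ 2 f) (b m x : ℝ) :
    iteratedDeriv 2 (fun x => f (b + m * x ^ 2)) x
      = 4 * m ^ 2 * x ^ 2 * iteratedDeriv 2 f (b + m * x ^ 2) + 2 * m * deriv f (b + m * x ^ 2) := by
  have hq : ContDiff ℝ 2 (fun x : ℝ => b + m * x ^ 2) := by fun_prop
  have hq' : deriv (fun x : ℝ => b + m * x ^ 2) = fun x => m * (2 * x) := by
    funext x; simp
  have hq'' : iteratedDeriv 2 (fun x : ℝ => b + m * x ^ 2) x = 2 * m := by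
    rw [iteratedDeriv_succ, iteratedDeriv_one, hq']
    simp only [deriv_const_mul_field', deriv_const_mul_id']
    ring
  rw [← Function.comp_def f, iteratedDeriv_comp_two hf.contDiffAt hq.contDiffAt, hq', hq'']
  ring

end Calculus

theorem rpow_neg_third_pow {t : ℝ} (ht : 0 ≤ t) (n : ℕ) :
    (t ^ (-(1:ℝ)/3)) ^ n = t ^ (-(n:ℝ)/3) := by
  rw [← rpow_natCast, ← rpow_mul ht]
  ring_nf

noncomputable def selfSimilar (ψ : ℝ → ℝ) (x t r : ℝ) : ℝ :=
  t ^ (-(2:ℝ)/3) * ψ (t ^ (-(1:ℝ)/3) * r + t ^ (-(4:ℝ)/3) * x ^ 2)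

noncomputable def kpFlux (φ : ℝ → ℝ → ℝ → ℝ) (x t r : ℝ) : ℝ :=
  deriv (fun t' => φ x t' r) t + φ x t r * deriv (fun s => φ x t s) r
    + (1/12) * iteratedDeriv 3 (fun s => φ x t s) r

theorem kpDiff_eq_deriv_kpFlux (φ : ℝ → ℝ → ℝ → ℝ) (x t r : ℝ) :
    kpDiff φ x t r = deriv (kpFlux φ x t) r + (1/4) * iteratedDeriv 2 (fun x' => φ x' t r) x :=
  rfl

noncomputable def selfSimilarFlux (ψ : ℝ → ℝ) (y s : ℝ) : ℝ :=
  ψ s * deriv ψ s + iteratedDeriv 3 ψ s / 12 - (2 * ψ s + (s + 3 * y) * deriv ψ s) / 3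

section SelfSimilar

variable {ψ : ℝ → ℝ} {x t w : ℝ}

theorem selfSimilar_of_pos (ht : 0 < t) (hw : t ^ (-(1:ℝ)/3) = w) (r : ℝ) :
    selfSimilar ψ x t r = w ^ 2 * ψ (w * r + w ^ 4 * x ^ 2) := by
  rw [selfSimilar, ← hw, rpow_neg_third_pow ht.le, rpow_neg_third_pow ht.le]
  norm_num

theorem hasDerivAt_selfSimilar_time (hψ : Differentiable ℝ ψ) (ht : 0 < t)
    (hw : t ^ (-(1:ℝ)/3) = w) (r : ℝ) :
    HasDerivAt (fun t' => selfSimilar ψ x t' r)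
      (-w ^ 4 / 3 * (2 * w * ψ (w * r + w ^ 4 * x ^ 2)
        + w ^ 2 * (r + 4 * w ^ 3 * x ^ 2) * deriv ψ (w * r + w ^ 4 * x ^ 2))) t := by
  have hpow : HasDerivAt (fun t' : ℝ => t' ^ (-(1:ℝ)/3)) (-(1/3) * w ^ 4) t := by
    refine (hasDerivAt_rpow_const (p := -(1:ℝ)/3) (Or.inl ht.ne')).congr_deriv ?_
    rw [← hw, rpow_neg_third_pow ht.le]
    norm_num
  have hξ : HasDerivAt (fun v : ℝ => v * r + v ^ 4 * x ^ 2) (r + 4 * w ^ 3 * x ^ 2) w :=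
    ((hasDerivAt_id' w).mul_const r).add ((hasDerivAt_pow 4 w).mul_const (x ^ 2)) |>.congr_deriv
      (by norm_num)
  have hg : HasDerivAt (fun v : ℝ => v ^ 2 * ψ (v * r + v ^ 4 * x ^ 2))
      (2 * w * ψ (w * r + w ^ 4 * x ^ 2)
        + w ^ 2 * ((r + 4 * w ^ 3 * x ^ 2) * deriv ψ (w * r + w ^ 4 * x ^ 2))) w :=
    ((hasDerivAt_pow 2 w).mul ((hψ _).hasDerivAt.comp w hξ)).congr_deriv
      (by rw [Function.comp_apply]; ring)
  have hpos : (fun t' => selfSimilar ψ x t' r)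
      =ᶠ[nhds t] fun t' => (t' ^ (-(1:ℝ)/3)) ^ 2
        * ψ (t' ^ (-(1:ℝ)/3) * r + (t' ^ (-(1:ℝ)/3)) ^ 4 * x ^ 2) :=
    (eventually_gt_nhds ht).mono fun t' ht' => selfSimilar_of_pos ht' rfl r
  subst hw
  exact ((hg.comp t hpow).congr_of_eventuallyEq hpos).congr_deriv (by ring)

theorem kpFlux_selfSimilar (hψ : ContDiff ℝ 3 ψ) (ht : 0 < t) (hw : t ^ (-(1:ℝ)/3) = w) :
    kpFlux (selfSimilar ψ) x t
      = fun r => w ^ 5 * selfSimilarFlux ψ (w ^ 4 * x ^ 2) (w * r + w ^ 4 * x ^ 2) := by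
  have hslice : (fun s => selfSimilar ψ x t s) = fun s => w ^ 2 * ψ (w * s + w ^ 4 * x ^ 2) :=
    funext (selfSimilar_of_pos ht hw)
  have hderiv := iteratedDeriv_comp_affine (n := 1) (hψ.of_le (by norm_num)) w (w ^ 4 * x ^ 2)
  simp only [iteratedDeriv_one] at hderiv
  funext r
  rw [kpFlux, (hasDerivAt_selfSimilar_time (hψ.differentiable (by norm_num)) ht hw r).deriv,
    hslice, deriv_const_mul_field, hderiv, iteratedDeriv_const_mul_field,
    iteratedDeriv_comp_affine hψ, selfSimilar_of_pos ht hw, selfSimilarFlux]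
  ring

theorem iteratedDeriv_two_selfSimilar_space (hψ : ContDiff ℝ 2 ψ) (ht : 0 < t)
    (hw : t ^ (-(1:ℝ)/3) = w) (r : ℝ) :
    iteratedDeriv 2 (fun x' => selfSimilar ψ x' t r) x
      = w ^ 2 * (4 * w ^ 8 * x ^ 2 * iteratedDeriv 2 ψ (w * r + w ^ 4 * x ^ 2)
        + 2 * w ^ 4 * deriv ψ (w * r + w ^ 4 * x ^ 2)) := by
  rw [funext fun x' => selfSimilar_of_pos (x := x') ht hw r, iteratedDeriv_const_mul_field,
    iteratedDeriv_two_comp_add_mul_sq hψ]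
  ring

end SelfSimilar

section ODE

variable {ψ : ℝ → ℝ}

theorem hasDerivAt_selfSimilarFlux (hψ : ContDiff ℝ 4 ψ) (y s : ℝ) :
    HasDerivAt (selfSimilarFlux ψ y)
      (deriv ψ s ^ 2 + ψ s * iteratedDeriv 2 ψ s + iteratedDeriv 4 ψ s / 12
        - (3 * deriv ψ s + (s + 3 * y) * iteratedDeriv 2 ψ s) / 3) s := by
  have d0 : HasDerivAt ψ (deriv ψ s) s := (hψ.differentiable (by norm_num) s).hasDerivAt
  have d1 : HasDerivAt (deriv ψ) (iteratedDeriv 2 ψ s) s := by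
    simpa using hasDerivAt_iteratedDeriv hψ (k := 1) (by norm_num) s
  have d3 := hasDerivAt_iteratedDeriv hψ (k := 3) (by norm_num) s
  exact (((d0.mul d1).add (d3.div_const 12)).sub
    (((d0.const_mul 2).add (((hasDerivAt_id' s).add_const (3 * y)).mul d1)).div_const 3)).congr_deriv
    (by ring)

theorem ode_deriv_eq_zero (hψ : ContDiff ℝ 4 ψ)
    (hode : ∀ s : ℝ, iteratedDeriv 3 ψ s + 12 * ψ s * deriv ψ s
      - 4 * s * deriv ψ s - 2 * ψ s = 0) (s : ℝ) :
    iteratedDeriv 4 ψ s + 12 * (deriv ψ s ^ 2 + ψ s * iteratedDeriv 2 ψ s)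
      - 6 * deriv ψ s - 4 * s * iteratedDeriv 2 ψ s = 0 := by
  have d0 : HasDerivAt ψ (deriv ψ s) s := (hψ.differentiable (by norm_num) s).hasDerivAt
  have d1 : HasDerivAt (deriv ψ) (iteratedDeriv 2 ψ s) s := by
    simpa using hasDerivAt_iteratedDeriv hψ (k := 1) (by norm_num) s
  have d3 := hasDerivAt_iteratedDeriv hψ (k := 3) (by norm_num) s
  have hlhs : HasDerivAt (fun s => iteratedDeriv 3 ψ s + 12 * ψ s * deriv ψ s
      - 4 * s * deriv ψ s - 2 * ψ s)
      (iteratedDeriv 4 ψ s + 12 * (deriv ψ s ^ 2 + ψ s * iteratedDeriv 2 ψ s)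
        - 6 * deriv ψ s - 4 * s * iteratedDeriv 2 ψ s) s :=
    (((d3.add ((d0.const_mul 12).mul d1)).sub (((hasDerivAt_id' s).const_mul 4).mul d1)).sub
      (d0.const_mul 2)).congr_deriv (by ring)
  rw [funext hode] at hlhs
  exact hlhs.unique (hasDerivAt_const s 0)

end ODE

/-- the self-similar ansatz `φ(x,t,r) = t^{-2/3} ψ(t^{-1/3} r + t^{-4/3} x²)`
built from a solution `ψ` of `ψ''' + 12 ψ ψ' - 4 s ψ' - 2 ψ = 0` satisfies the
(r-differentiated) KP equation on ℝ × (0,∞) × ℝ. -/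
theorem selfSimilar_GUE_solves_KP (ψ : ℝ → ℝ)
    (hψ : ContDiff ℝ (⊤ : ℕ∞) ψ)
    (hode : ∀ s : ℝ, iteratedDeriv 3 ψ s + 12 * ψ s * deriv ψ s
      - 4 * s * deriv ψ s - 2 * ψ s = 0) :
    ∀ x t r : ℝ, 0 < t →
      kpDiff (fun x t r =>
        t ^ (-(2:ℝ)/3) * ψ (t ^ (-(1:ℝ)/3) * r + t ^ (-(4:ℝ)/3) * x ^ 2)) x t r = 0 := by
  intro x t r ht
  have hψ4 : ContDiff ℝ 4 ψ := hψ.of_le (WithTop.coe_le_coe.mpr le_top)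
  obtain ⟨w, hw⟩ : ∃ w, t ^ (-(1:ℝ)/3) = w := ⟨_, rfl⟩
  have hflux : HasDerivAt
      (fun r' => w ^ 5 * selfSimilarFlux ψ (w ^ 4 * x ^ 2) (w * r' + w ^ 4 * x ^ 2)) _ r :=
    ((hasDerivAt_selfSimilarFlux hψ4 _ _).comp r
      (((hasDerivAt_id' r).const_mul w).add_const _)).const_mul _
  change kpDiff (selfSimilar ψ) x t r = 0
  rw [kpDiff_eq_deriv_kpFlux, kpFlux_selfSimilar (hψ4.of_le (by norm_num)) ht hw, hflux.deriv,
    iteratedDeriv_two_selfSimilar_space (hψ4.of_le (by norm_num)) ht hw]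
  linear_combination w ^ 6 / 12 * ode_deriv_eq_zero hψ4 hode (w * r + w ^ 4 * x ^ 2)
end

section
/- Let u, a, b, y be as in the Painlevé II system below. Then for all (x,w) ∈ ℝ × ℝ: ∂_w^2 y(x,w) = (−8 − 16·u(x)·u'(x))·a(x,w)·a(x,−w) + (16w^2·u(x) − 16w·u'(x) + 8·u(x)^3 + 4·u(x)·x)·a(x,w)·b(x,−w) + (16w^2·u(x) + 16w·u'(x) + 8·u(x)^3 + 4·u(x)·x)·b(x,w)·a(x,−w). -/
/-!
Differentiating `y` once with the product rule and the `w`-equations of the Lax pair gives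
`∂_w y = -8w·a(w)a(-w) - 2u·b(w)a(-w) + 2u·a(w)b(-w)`; differentiating again gives the claimed
formula up to a multiple of `a(w)a(-w) - b(w)b(-w)`, which vanishes because the two reflection
relations `a(w) = -b(-w)·E(w)`, `b(w) = -a(-w)·E(w)` carry the same factor `E(w)`.
-/

lemma differentiable_apply_of_differentiable_uncurry {f : ℝ → ℝ → ℝ}
    (hf : Differentiable ℝ (fun p : ℝ × ℝ => f p.1 p.2)) (x : ℝ) :
    Differentiable ℝ (f x) :=
  hf.comp ((differentiable_const x).prodMk differentiable_id)

lemma mul_apply_neg_eq_of_reflection {A B : ℝ → ℝ} {w e : ℝ}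
    (hA : A w = -B (-w) * e) (hB : B w = -A (-w) * e) :
    A w * A (-w) = B w * B (-w) := by
  rw [hA, hB]
  ring

namespace PainleveII

variable {x p q : ℝ} {A B : ℝ → ℝ}

/-- The `w`-equations of the Painlevé II Lax pair for `(A, B) = (a(x, ·), b(x, ·))`,
with `p = u(x)` and `q = u'(x)`. -/
def IsWFlow (x p q : ℝ) (A B : ℝ → ℝ) : Prop :=
  ∀ w, HasDerivAt A (2 * p ^ 2 * A w - (4 * w * p + 2 * q) * B w) w ∧
    HasDerivAt B ((-(4 * w * p) + 2 * q) * A w + (8 * w ^ 2 - 2 * x - 2 * p ^ 2) * B w) w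

lemma IsWFlow.hasDerivAt_comp_neg_left (h : IsWFlow x p q A B) (w : ℝ) :
    HasDerivAt (fun w' => A (-w'))
      (-(2 * p ^ 2 * A (-w) + (4 * w * p - 2 * q) * B (-w))) w :=
  ((h (-w)).1.comp w (hasDerivAt_neg w)).congr_deriv (by ring)

lemma IsWFlow.hasDerivAt_comp_neg_right (h : IsWFlow x p q A B) (w : ℝ) :
    HasDerivAt (fun w' => B (-w'))
      (-((4 * w * p + 2 * q) * A (-w) + (8 * w ^ 2 - 2 * x - 2 * p ^ 2) * B (-w))) w :=
  ((h (-w)).2.comp w (hasDerivAt_neg w)).congr_deriv (by ring)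

lemma IsWFlow.hasDerivAt_y (h : IsWFlow x p q A B) (w : ℝ) :
    HasDerivAt
      (fun w => (2 * p ^ 2 + x - 4 * w ^ 2) * A w * A (-w)
        - (q + 2 * w * p) * B w * A (-w) - (q - 2 * w * p) * A w * B (-w))
      (-8 * w * A w * A (-w) - 2 * p * B w * A (-w) + 2 * p * A w * B (-w)) w := by
  have hc₁ : HasDerivAt (fun w : ℝ => 2 * p ^ 2 + x - 4 * w ^ 2) (-(8 * w)) w :=
    (((hasDerivAt_pow 2 w).const_mul 4).const_sub (2 * p ^ 2 + x)).congr_deriv (by ring)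
  have hc₂ : HasDerivAt (fun w : ℝ => q + 2 * w * p) (2 * p) w := by
    simpa using (((hasDerivAt_id w).const_mul 2).mul_const p).const_add q
  have hc₃ : HasDerivAt (fun w : ℝ => q - 2 * w * p) (-(2 * p)) w := by
    simpa using (((hasDerivAt_id w).const_mul 2).mul_const p).const_sub q
  obtain ⟨hA, hB⟩ := h w
  have hA' := h.hasDerivAt_comp_neg_left w
  have hB' := h.hasDerivAt_comp_neg_right w
  refine ((((hc₁.mul hA).mul hA').sub ((hc₂.mul hB).mul hA')).sub
    ((hc₃.mul hA).mul hB')).congr_deriv ?_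
  simp only [Pi.mul_apply]
  ring

lemma IsWFlow.hasDerivAt_deriv_y (h : IsWFlow x p q A B) (w : ℝ) :
    HasDerivAt
      (fun w => -8 * w * A w * A (-w) - 2 * p * B w * A (-w) + 2 * p * A w * B (-w))
      ((-8 - 8 * p * q) * A w * A (-w) - 8 * p * q * B w * B (-w)
        + (16 * w ^ 2 * p - 16 * w * q + 8 * p ^ 3 + 4 * p * x) * A w * B (-w)
        + (16 * w ^ 2 * p + 16 * w * q + 8 * p ^ 3 + 4 * p * x) * B w * A (-w)) w := by
  have hc : HasDerivAt (fun w : ℝ => -8 * w) (-8) w := by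
    simpa using (hasDerivAt_id w).const_mul (-8 : ℝ)
  obtain ⟨hA, hB⟩ := h w
  have hA' := h.hasDerivAt_comp_neg_left w
  have hB' := h.hasDerivAt_comp_neg_right w
  refine ((((hc.mul hA).mul hA').sub ((hB.const_mul (2 * p)).mul hA')).add
    ((hA.const_mul (2 * p)).mul hB')).congr_deriv ?_
  simp only [Pi.mul_apply]
  ring

end PainleveII

open PainleveII in
theorem painleveII_y_deriv_w_two_general
    (u : ℝ → ℝ) (a b y : ℝ → ℝ → ℝ)
    (ha : ContDiff ℝ (⊤ : ℕ∞) (fun p : ℝ × ℝ => a p.1 p.2))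
    (hb : ContDiff ℝ (⊤ : ℕ∞) (fun p : ℝ × ℝ => b p.1 p.2))
    (haw : ∀ x w : ℝ, deriv (fun w' => a x w') w
      = 2 * u x ^ 2 * a x w - (4 * w * u x + 2 * deriv u x) * b x w)
    (hbw : ∀ x w : ℝ, deriv (fun w' => b x w') w
      = (-(4 * w * u x) + 2 * deriv u x) * a x w
        + (8 * w ^ 2 - 2 * x - 2 * u x ^ 2) * b x w)
    (hab : ∀ x w : ℝ, a x w = -b x (-w) * Real.exp (8 * w ^ 3 / 3 - 2 * w * x))
    (hba : ∀ x w : ℝ, b x w = -a x (-w) * Real.exp (8 * w ^ 3 / 3 - 2 * w * x))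
    (hy : ∀ x w : ℝ, y x w
      = (2 * u x ^ 2 + x - 4 * w ^ 2) * a x w * a x (-w)
        - (deriv u x + 2 * w * u x) * b x w * a x (-w)
        - (deriv u x - 2 * w * u x) * a x w * b x (-w)) :
    ∀ x w : ℝ, iteratedDeriv 2 (fun w' => y x w') w
      = (-8 - 16 * u x * deriv u x) * a x w * a x (-w)
        + (16 * w ^ 2 * u x - 16 * w * deriv u x + 8 * u x ^ 3 + 4 * u x * x)
            * a x w * b x (-w)
        + (16 * w ^ 2 * u x + 16 * w * deriv u x + 8 * u x ^ 3 + 4 * u x * x)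
            * b x w * a x (-w) := by
  intro x w
  have hflow : IsWFlow x (u x) (deriv u x) (a x) (b x) := fun w =>
    ⟨haw x w ▸ (differentiable_apply_of_differentiable_uncurry
        (ha.differentiable (by simp)) x w).hasDerivAt,
      hbw x w ▸ (differentiable_apply_of_differentiable_uncurry
        (hb.differentiable (by simp)) x w).hasDerivAt⟩
  have hy' : deriv (fun w' => y x w') = fun w =>
      -8 * w * a x w * a x (-w) - 2 * u x * b x w * a x (-w) + 2 * u x * a x w * b x (-w) :=
    funext fun w => (funext (hy x) ▸ hflow.hasDerivAt_y w).deriv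
  rw [iteratedDeriv_succ, iteratedDeriv_one, hy', (hflow.hasDerivAt_deriv_y w).deriv]
  linear_combination (8 * u x * deriv u x) *
    mul_apply_neg_eq_of_reflection (hab x w) (hba x w)

/-- second w-derivative of y in the Painlevé II system. -/
theorem painleveII_y_deriv_w_two
    (u : ℝ → ℝ) (a b y : ℝ → ℝ → ℝ)
    (hu : ContDiff ℝ (⊤ : ℕ∞) u)
    (hP2 : ∀ x : ℝ, deriv (deriv u) x = 2 * u x ^ 3 + x * u x)
    (ha : ContDiff ℝ (⊤ : ℕ∞) (fun p : ℝ × ℝ => a p.1 p.2))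
    (hb : ContDiff ℝ (⊤ : ℕ∞) (fun p : ℝ × ℝ => b p.1 p.2))
    (hax : ∀ x w : ℝ, deriv (fun x' => a x' w) x = u x * b x w)
    (hbx : ∀ x w : ℝ, deriv (fun x' => b x' w) x = u x * a x w - 2 * w * b x w)
    (haw : ∀ x w : ℝ, deriv (fun w' => a x w') w
      = 2 * u x ^ 2 * a x w - (4 * w * u x + 2 * deriv u x) * b x w)
    (hbw : ∀ x w : ℝ, deriv (fun w' => b x w') w
      = (-(4 * w * u x) + 2 * deriv u x) * a x w
        + (8 * w ^ 2 - 2 * x - 2 * u x ^ 2) * b x w)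
    (hab : ∀ x w : ℝ, a x w = -b x (-w) * Real.exp (8 * w ^ 3 / 3 - 2 * w * x))
    (hba : ∀ x w : ℝ, b x w = -a x (-w) * Real.exp (8 * w ^ 3 / 3 - 2 * w * x))
    (hy : ∀ x w : ℝ, y x w
      = (2 * u x ^ 2 + x - 4 * w ^ 2) * a x w * a x (-w)
        - (deriv u x + 2 * w * u x) * b x w * a x (-w)
        - (deriv u x - 2 * w * u x) * a x w * b x (-w)) :
    ∀ x w : ℝ, iteratedDeriv 2 (fun w' => y x w') w
      = (-8 - 16 * u x * deriv u x) * a x w * a x (-w)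
        + (16 * w ^ 2 * u x - 16 * w * deriv u x + 8 * u x ^ 3 + 4 * u x * x)
            * a x w * b x (-w)
        + (16 * w ^ 2 * u x + 16 * w * deriv u x + 8 * u x ^ 3 + 4 * u x * x)
            * b x w * a x (-w) :=
  painleveII_y_deriv_w_two_general u a b y ha hb haw hbw hab hba hy
end
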